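/- Let {m₁, m₂, m₃} ∈ C₃⁺. There is exactly one even 2-characteristic n such that {m₁, m₂, m₃, n} ∈ C₄⁺, namely n = m₁ + m₂ + m₃. -/
import Mathlib


open scoped Classical

/-- A 2-characteristic: a pair `m = (m', m'')` with `m', m'' ∈ (ZMod 2)²`. -/
abbrev Char2 : Type := (ZMod 2 × ZMod 2) × (ZMod 2 × ZMod 2)

/-- `m` is even if `m'₁·m''₁ + m'₂·m''₂ = 0` in `ZMod 2`. -/
def IsEvenChar (m : Char2) : Prop := m.1.1 * m.2.1 + m.1.2 * m.2.2 = 0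

/-- `m` is odd if it is not even. -/
def IsOddChar (m : Char2) : Prop := ¬ IsEvenChar m

/-- The finset of all (10) even 2-characteristics. -/
noncomputable def EvenChars : Finset Char2 := Finset.univ.filter IsEvenChar

/-- `C₃⁻`: 3-element sets of even characteristics whose sum is odd. -/
def C3minus (M : Finset Char2) : Prop :=
  M ⊆ EvenChars ∧ M.card = 3 ∧ IsOddChar (∑ m ∈ M, m)

/-- `C₃⁺`: 3-element sets of even characteristics whose sum is even. -/
def C3plus (M : Finset Char2) : Prop :=
  M ⊆ EvenChars ∧ M.card = 3 ∧ IsEvenChar (∑ m ∈ M, m)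

/-- `C₄⁻`: 4-element sets of even characteristics all of whose 3-element subsets lie in `C₃⁻`. -/
def C4minus (M : Finset Char2) : Prop :=
  M ⊆ EvenChars ∧ M.card = 4 ∧ ∀ T ⊆ M, T.card = 3 → C3minus T

/-- `C₄⁺`: 4-element sets of even characteristics all of whose 3-element subsets lie in `C₃⁺`. -/
def C4plus (M : Finset Char2) : Prop :=
  M ⊆ EvenChars ∧ M.card = 4 ∧ ∀ T ⊆ M, T.card = 3 → C3plus T

/-- `C₅⁻`: 5-element sets of even characteristics containing exactly one element of `C₄⁻`. -/
def C5minus (M : Finset Char2) : Prop :=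
  M ⊆ EvenChars ∧ M.card = 5 ∧ ∃! T, T ⊆ M ∧ C4minus T

/-- `C₅⁺`: 5-element sets of even characteristics containing exactly one element of `C₄⁺`. -/
def C5plus (M : Finset Char2) : Prop :=
  M ⊆ EvenChars ∧ M.card = 5 ∧ ∃! T, T ⊆ M ∧ C4plus T

/-- `C₆⁻`: 6-element sets of even characteristics whose complement lies in `C₄⁺`. -/
def C6minus (M : Finset Char2) : Prop :=
  M ⊆ EvenChars ∧ M.card = 6 ∧ C4plus (EvenChars \ M)

/-- `C₆⁺`: 6-element sets of even characteristics whose complement lies in `C₄⁻`. -/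
def C6plus (M : Finset Char2) : Prop :=
  M ⊆ EvenChars ∧ M.card = 6 ∧ C4minus (EvenChars \ M)

def evenCharDec (m : Char2) : Decidable (IsEvenChar m) := by unfold IsEvenChar; infer_instance

/-- the symplectic pairing associated to the quadratic form of evenness -/
def Bf (m n : Char2) : ZMod 2 :=
  m.1.1 * n.2.1 + n.1.1 * m.2.1 + m.1.2 * n.2.2 + n.1.2 * m.2.2

lemma z2 : ∀ x : ZMod 2, x + x = 0 := by decide

lemma B_add_right (x y z : Char2) : Bf x (y + z) = Bf x y + Bf x z := by
  simp only [Bf, Prod.fst_add, Prod.snd_add]; ring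

lemma B_add_left (x y z : Char2) : Bf (x + y) z = Bf x z + Bf y z := by
  simp only [Bf, Prod.fst_add, Prod.snd_add]; ring

lemma B_comm (x y : Char2) : Bf x y = Bf y x := by simp only [Bf]; ring

lemma B_self (x : Char2) : Bf x x = 0 := by
  have h : ∀ a b c d : ZMod 2, a * c + a * c + b * d + b * d = 0 := by decide
  exact h _ _ _ _

lemma id1 (a b c : Char2) : a + b + (a + b + c) = c := by
  have h : ∀ x y z : ZMod 2, x + y + (x + y + z) = z := by decide
  exact Prod.ext (Prod.ext (h _ _ _) (h _ _ _)) (Prod.ext (h _ _ _) (h _ _ _))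

lemma id2 (a b c : Char2) : a + c + (a + b + c) = b := by
  have h : ∀ x y z : ZMod 2, x + z + (x + y + z) = y := by decide
  exact Prod.ext (Prod.ext (h _ _ _) (h _ _ _)) (Prod.ext (h _ _ _) (h _ _ _))

lemma id3 (a b c : Char2) : a + b + (a + c) + (a + b + c) = a := by
  have h : ∀ x y z : ZMod 2, x + y + (x + z) + (x + y + z) = x := by decide
  exact Prod.ext (Prod.ext (h _ _ _) (h _ _ _)) (Prod.ext (h _ _ _) (h _ _ _))

lemma sum0 (a b c : Char2) : a + (b + (c + (a + b + c))) = 0 := by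
  have h : ∀ x y z : ZMod 2, x + (y + (z + (x + y + z))) = 0 := by decide
  exact Prod.ext (Prod.ext (h _ _ _) (h _ _ _)) (Prod.ext (h _ _ _) (h _ _ _))

lemma L_cancel {x y : Char2} (h : x + y = 0) : x = y := by
  have h2 : ∀ a b : ZMod 2, a + b = 0 → a = b := by decide
  exact Prod.ext
    (Prod.ext (h2 _ _ (congrArg (fun p : Char2 => p.1.1) h))
      (h2 _ _ (congrArg (fun p : Char2 => p.1.2) h)))
    (Prod.ext (h2 _ _ (congrArg (fun p : Char2 => p.2.1) h))
      (h2 _ _ (congrArg (fun p : Char2 => p.2.2) h)))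

lemma L_shift {x y z : Char2} (h : x + y = z) : x = z + y := by
  have h2 : ∀ a b c : ZMod 2, a + b = c → a = c + b := by decide
  exact Prod.ext
    (Prod.ext (h2 _ _ _ (congrArg (fun p : Char2 => p.1.1) h))
      (h2 _ _ _ (congrArg (fun p : Char2 => p.1.2) h)))
    (Prod.ext (h2 _ _ _ (congrArg (fun p : Char2 => p.2.1) h))
      (h2 _ _ _ (congrArg (fun p : Char2 => p.2.2) h)))

lemma L_addcancel {x y z : Char2} (h : x + y = x + z) : y = z := by
  have h2 : ∀ a b c : ZMod 2, a + b = a + c → b = c := by decide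
  exact Prod.ext
    (Prod.ext (h2 _ _ _ (congrArg (fun p : Char2 => p.1.1) h))
      (h2 _ _ _ (congrArg (fun p : Char2 => p.1.2) h)))
    (Prod.ext (h2 _ _ _ (congrArg (fun p : Char2 => p.2.1) h))
      (h2 _ _ _ (congrArg (fun p : Char2 => p.2.2) h)))

lemma L_sum_ne₁ {a b c : Char2} (h : b ≠ c) : a + b + c ≠ a := by
  intro he
  have h2 : ∀ p q r : ZMod 2, p + q + r = p → q = r := by decide
  exact h (Prod.ext
    (Prod.ext (h2 _ _ _ (congrArg (fun p : Char2 => p.1.1) he))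
      (h2 _ _ _ (congrArg (fun p : Char2 => p.1.2) he)))
    (Prod.ext (h2 _ _ _ (congrArg (fun p : Char2 => p.2.1) he))
      (h2 _ _ _ (congrArg (fun p : Char2 => p.2.2) he))))

lemma L_sum_ne₂ {a b c : Char2} (h : a ≠ c) : a + b + c ≠ b := by
  intro he
  have h2 : ∀ p q r : ZMod 2, p + q + r = q → p = r := by decide
  exact h (Prod.ext
    (Prod.ext (h2 _ _ _ (congrArg (fun p : Char2 => p.1.1) he))
      (h2 _ _ _ (congrArg (fun p : Char2 => p.1.2) he)))
    (Prod.ext (h2 _ _ _ (congrArg (fun p : Char2 => p.2.1) he))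
      (h2 _ _ _ (congrArg (fun p : Char2 => p.2.2) he))))

lemma L_sum_ne₃ {a b c : Char2} (h : a ≠ b) : a + b + c ≠ c := by
  intro he
  have h2 : ∀ p q r : ZMod 2, p + q + r = r → p = q := by decide
  exact h (Prod.ext
    (Prod.ext (h2 _ _ _ (congrArg (fun p : Char2 => p.1.1) he))
      (h2 _ _ _ (congrArg (fun p : Char2 => p.1.2) he)))
    (Prod.ext (h2 _ _ _ (congrArg (fun p : Char2 => p.2.1) he))
      (h2 _ _ _ (congrArg (fun p : Char2 => p.2.2) he))))

section
attribute [local instance] evenCharDec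
set_option synthInstance.maxHeartbeats 1000000 in
set_option synthInstance.maxSize 2000 in
set_option maxHeartbeats 2000000 in
lemma T_lemma : ∀ a b c : Char2, IsEvenChar a → IsEvenChar b → IsEvenChar c →
    IsEvenChar (a + b + c) → Bf (a + b) c = Bf a b := by decide
end

lemma Bab0 (a b c : Char2) (ha : IsEvenChar a) (hb : IsEvenChar b) (hc : IsEvenChar c)
    (habc : IsEvenChar (a + b + c)) : Bf (a + b) (a + c) = 0 := by
  rw [B_add_right, B_add_left, B_self, zero_add, T_lemma a b c ha hb hc habc, B_comm b a]
  exact z2 _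

set_option synthInstance.maxHeartbeats 1000000 in
set_option synthInstance.maxSize 2000 in
set_option maxHeartbeats 2000000 in
lemma kernel : ∀ a b d : Char2, a ≠ 0 → b ≠ 0 → a ≠ b → Bf a b = 0 →
    Bf a d = 0 → Bf b d = 0 → d = 0 ∨ d = a ∨ d = b ∨ d = a + b := by decide

lemma mem_EvenChars {y : Char2} (hy : IsEvenChar y) : y ∈ EvenChars :=
  Finset.mem_filter.mpr ⟨Finset.mem_univ _, hy⟩

lemma card3_ne {a b c : Char2} (h : ({a, b, c} : Finset Char2).card = 3) :
    a ≠ b ∧ a ≠ c ∧ b ≠ c := by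
  refine ⟨?_, ?_, ?_⟩ <;> rintro rfl
  · have hs : ({a, a, c} : Finset Char2) ⊆ {a, c} := by intro x; simp; try tauto
    have h1 := Finset.card_le_card hs
    have h2 : ({a, c} : Finset Char2).card ≤ 2 :=
      (Finset.card_insert_le _ _).trans (by simp)
    omega
  · have hs : ({a, b, a} : Finset Char2) ⊆ {a, b} := by intro x; simp; try tauto
    have h1 := Finset.card_le_card hs
    have h2 : ({a, b} : Finset Char2).card ≤ 2 :=
      (Finset.card_insert_le _ _).trans (by simp)
    omega
  · have hs : ({a, b, b} : Finset Char2) ⊆ {a, b} := by intro x; simp; try tauto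
    have h1 := Finset.card_le_card hs
    have h2 : ({a, b} : Finset Char2).card ≤ 2 :=
      (Finset.card_insert_le _ _).trans (by simp)
    omega

theorem unique_completion_C4plus (m₁ m₂ m₃ : Char2)
    (h : C3plus {m₁, m₂, m₃}) :
    ∀ n : Char2, (IsEvenChar n ∧ C4plus {m₁, m₂, m₃, n}) ↔ n = m₁ + m₂ + m₃ := by
  obtain ⟨hsub3, hcard3, hsum3⟩ := h
  have hm1 : IsEvenChar m₁ := (Finset.mem_filter.mp (hsub3 (by simp))).2
  have hm2 : IsEvenChar m₂ := (Finset.mem_filter.mp (hsub3 (by simp))).2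
  have hm3 : IsEvenChar m₃ := (Finset.mem_filter.mp (hsub3 (by simp))).2
  obtain ⟨h12, h13, h23⟩ := card3_ne hcard3
  have hsum_eq : (∑ m ∈ ({m₁, m₂, m₃} : Finset Char2), m) = m₁ + m₂ + m₃ := by
    rw [Finset.sum_insert (by simp [h12, h13]), Finset.sum_insert (by simp [h23]),
      Finset.sum_singleton, ← add_assoc]
  have hev123 : IsEvenChar (m₁ + m₂ + m₃) := hsum_eq ▸ hsum3
  intro n
  constructor
  · rintro ⟨hevn, hsub4, hcard4, htrip⟩
    have hn1 : n ≠ m₁ := by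
      intro he
      have hs : ({m₁, m₂, m₃, n} : Finset Char2) ⊆ {m₁, m₂, m₃} := by
        intro x hx
        simp only [Finset.mem_insert, Finset.mem_singleton] at hx ⊢
        rcases hx with hh | hh | hh | hh <;> simp [hh, he]
      have := Finset.card_le_card hs
      omega
    have hn2 : n ≠ m₂ := by
      intro he
      have hs : ({m₁, m₂, m₃, n} : Finset Char2) ⊆ {m₁, m₂, m₃} := by
        intro x hx
        simp only [Finset.mem_insert, Finset.mem_singleton] at hx ⊢
        rcases hx with hh | hh | hh | hh <;> simp [hh, he]
      have := Finset.card_le_card hs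
      omega
    have hn3 : n ≠ m₃ := by
      intro he
      have hs : ({m₁, m₂, m₃, n} : Finset Char2) ⊆ {m₁, m₂, m₃} := by
        intro x hx
        simp only [Finset.mem_insert, Finset.mem_singleton] at hx ⊢
        rcases hx with hh | hh | hh | hh <;> simp [hh, he]
      have := Finset.card_le_card hs
      omega
    have h12n : IsEvenChar (m₁ + m₂ + n) := by
      have hC := htrip {m₁, m₂, n} (by intro x; simp; try tauto)
        (by rw [Finset.card_insert_of_notMem (by simp [h12, hn1.symm]),
              Finset.card_insert_of_notMem (by simp [hn2.symm]), Finset.card_singleton])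
      have hs : (∑ m ∈ ({m₁, m₂, n} : Finset Char2), m) = m₁ + (m₂ + n) := by
        rw [Finset.sum_insert (by simp [h12, hn1.symm]),
          Finset.sum_insert (by simp [hn2.symm]), Finset.sum_singleton]
      have := hC.2.2
      rw [hs] at this
      rwa [add_assoc]
    have h13n : IsEvenChar (m₁ + m₃ + n) := by
      have hC := htrip {m₁, m₃, n} (by intro x; simp; try tauto)
        (by rw [Finset.card_insert_of_notMem (by simp [h13, hn1.symm]),
              Finset.card_insert_of_notMem (by simp [hn3.symm]), Finset.card_singleton])
      have hs : (∑ m ∈ ({m₁, m₃, n} : Finset Char2), m) = m₁ + (m₃ + n) := by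
        rw [Finset.sum_insert (by simp [h13, hn1.symm]),
          Finset.sum_insert (by simp [hn3.symm]), Finset.sum_singleton]
      have := hC.2.2
      rw [hs] at this
      rwa [add_assoc]
    have e1 : Bf (m₁ + m₂) n = Bf m₁ m₂ := T_lemma m₁ m₂ n hm1 hm2 hevn h12n
    have e2 : Bf (m₁ + m₂) m₃ = Bf m₁ m₂ := T_lemma m₁ m₂ m₃ hm1 hm2 hm3 hev123
    have e3 : Bf (m₁ + m₃) n = Bf m₁ m₃ := T_lemma m₁ m₃ n hm1 hm3 hevn h13n
    have hev132 : IsEvenChar (m₁ + m₃ + m₂) := by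
      have hp : m₁ + m₃ + m₂ = m₁ + m₂ + m₃ := by ring
      rw [hp]; exact hev123
    have e4 : Bf (m₁ + m₃) m₂ = Bf m₁ m₃ := T_lemma m₁ m₃ m₂ hm1 hm3 hm2 hev132
    have hBab : Bf (m₁ + m₂) (m₁ + m₃) = 0 := Bab0 m₁ m₂ m₃ hm1 hm2 hm3 hev123
    have had : Bf (m₁ + m₂) (n + (m₁ + m₂ + m₃)) = 0 := by
      rw [B_add_right, B_add_right, B_self, e1, e2, zero_add]
      exact z2 _
    have hbd : Bf (m₁ + m₃) (n + (m₁ + m₂ + m₃)) = 0 := by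
      have hp : n + (m₁ + m₂ + m₃) = n + (m₁ + m₃ + m₂) := by ring
      rw [hp, B_add_right, B_add_right, B_self, e3, e4, zero_add]
      exact z2 _
    have ha0 : m₁ + m₂ ≠ 0 := fun h0 => h12 (L_cancel h0)
    have hb0 : m₁ + m₃ ≠ 0 := fun h0 => h13 (L_cancel h0)
    have hab : m₁ + m₂ ≠ m₁ + m₃ := fun he => h23 (L_addcancel he)
    rcases kernel (m₁ + m₂) (m₁ + m₃) (n + (m₁ + m₂ + m₃)) ha0 hb0 hab hBab had hbd with
      h0 | ha | hb | hab'
    · exact L_cancel h0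
    · exact absurd ((L_shift ha).trans (id1 m₁ m₂ m₃)) hn3
    · exact absurd ((L_shift hb).trans (id2 m₁ m₂ m₃)) hn2
    · exact absurd ((L_shift hab').trans (id3 m₁ m₂ m₃)) hn1
  · rintro rfl
    have hn01 : m₁ + m₂ + m₃ ≠ m₁ := L_sum_ne₁ h23
    have hn02 : m₁ + m₂ + m₃ ≠ m₂ := L_sum_ne₂ h13
    have hn03 : m₁ + m₂ + m₃ ≠ m₃ := L_sum_ne₃ h12
    have hsubM : ({m₁, m₂, m₃, m₁ + m₂ + m₃} : Finset Char2) ⊆ EvenChars := by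
      intro x hx
      simp only [Finset.mem_insert, Finset.mem_singleton] at hx
      rcases hx with rfl | rfl | rfl | rfl
      · exact mem_EvenChars hm1
      · exact mem_EvenChars hm2
      · exact mem_EvenChars hm3
      · exact mem_EvenChars hev123
    have hcard4 : ({m₁, m₂, m₃, m₁ + m₂ + m₃} : Finset Char2).card = 4 := by
      rw [Finset.card_insert_of_notMem (by simp [h12, h13, hn01.symm]),
        Finset.card_insert_of_notMem (by simp [h23, hn02.symm]),
        Finset.card_insert_of_notMem (by simp [hn03.symm]), Finset.card_singleton]
    refine ⟨hev123, hsubM, hcard4, ?_⟩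
    intro T hTsub hT3
    have hsd : (({m₁, m₂, m₃, m₁ + m₂ + m₃} : Finset Char2) \ T).card = 1 := by
      rw [Finset.card_sdiff_of_subset hTsub, hcard4, hT3]
    obtain ⟨x, hx⟩ := Finset.card_eq_one.mp hsd
    have hxM : x ∈ ({m₁, m₂, m₃, m₁ + m₂ + m₃} : Finset Char2) :=
      (Finset.mem_sdiff.mp (hx ▸ Finset.mem_singleton_self x)).1
    have hTx : T = ({m₁, m₂, m₃, m₁ + m₂ + m₃} : Finset Char2).erase x := by
      rw [Finset.erase_eq, ← hx, Finset.sdiff_sdiff_eq_self hTsub]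
    have hsum4 : (∑ m ∈ ({m₁, m₂, m₃, m₁ + m₂ + m₃} : Finset Char2), m) = 0 := by
      rw [Finset.sum_insert (by simp [h12, h13, hn01.symm]),
        Finset.sum_insert (by simp [h23, hn02.symm]),
        Finset.sum_insert (by simp [hn03.symm]), Finset.sum_singleton]
      exact sum0 m₁ m₂ m₃
    have hsumT : (∑ m ∈ T, m) = x := by
      have h' := Finset.add_sum_erase ({m₁, m₂, m₃, m₁ + m₂ + m₃} : Finset Char2)
        (fun m => m) hxM
      rw [hsum4] at h'
      rw [hTx]
      exact (L_cancel h').symm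
    refine ⟨hTsub.trans hsubM, hT3, ?_⟩
    rw [hsumT]
    exact (Finset.mem_filter.mp (hsubM hxM)).2
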